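/- arXiv:1908.09959 — 2 statements merged into one kernel-verified Lean document; each statement's English description precedes it below -/
import Mathlib

section
/- Let 𝒳 be a finite nonempty set, let (r(x))_{x∈𝒳} be a centered Gaussian vector, and let (H(x))_{x∈𝒳} be a Gaussian vector independent of r. Then |E log ∑_{x∈𝒳} exp(H(x) + r(x)) − E log ∑_{x∈𝒳} exp(H(x))| ≤ max_{x∈𝒳} Var(r(x)). -/
/-!
Write `Z(h) = log ∑ₓ exp h(x)` and `w(h)(x) = exp h(x) / ∑ᵧ exp h(y)` for the Gibbs weights, so
that `Z(h + s) = Z(h) + log ∑ₓ w(h)(x) exp s(x)`.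

Jensen for `exp` bounds the logarithm below by `∑ₓ w(h)(x) s(x)`. Since `w(H)` is independent of
the centered vector `r`, this term has mean zero, whence `E Z(H) ≤ E Z(H + r)`.

For the other side put `κ(x) = log E exp r(x) = Var r(x) / 2` and use `log y ≤ y - 1` with
`h = H + κ`, `s = r - κ`: the error `∑ₓ w(H + κ)(x) (exp (r(x) - κ(x)) - 1)` has mean zero by
independence again, and `Z(H + κ) ≤ Z(H) + maxₓ κ(x)`. Altogether
`0 ≤ E Z(H + r) - E Z(H) ≤ maxₓ Var r(x) / 2`.
-/

open MeasureTheory ProbabilityTheory Filter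
open scoped NNReal ENNReal

noncomputable section

/-- `(r x)_{x ∈ ι}` is a centered Gaussian vector: each finite linear combination
`∑ₓ cₓ r(x)` is a centered Gaussian random variable. -/
def IsCenteredGaussianVector {Ω : Type} [MeasurableSpace Ω] (μ : Measure Ω)
    {ι : Type} [Fintype ι] (r : ι → Ω → ℝ) : Prop :=
  (∀ x, Measurable (r x)) ∧
  ∀ c : ι → ℝ, ∃ v : ℝ≥0,
    Measure.map (fun ω => ∑ x, c x * r x ω) μ = gaussianReal 0 v

/-- `(H x)_{x ∈ ι}` is a (not necessarily centered) Gaussian vector. -/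
def IsGaussianVector {Ω : Type} [MeasurableSpace Ω] (μ : Measure Ω)
    {ι : Type} [Fintype ι] (H : ι → Ω → ℝ) : Prop :=
  (∀ x, Measurable (H x)) ∧
  ∀ c : ι → ℝ, ∃ m : ℝ, ∃ v : ℝ≥0,
    Measure.map (fun ω => ∑ x, c x * H x ω) μ = gaussianReal m v

open Real Finset

section LogSumExp

variable {ι : Type*} [Fintype ι]

def logSumExp (f : ι → ℝ) : ℝ := log (∑ x, exp (f x))

def gibbs (f : ι → ℝ) (x : ι) : ℝ := exp (f x) / ∑ y, exp (f y)

lemma measurable_logSumExp : Measurable (logSumExp : (ι → ℝ) → ℝ) := by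
  unfold logSumExp; fun_prop

lemma measurable_gibbs (x : ι) : Measurable fun f : ι → ℝ => gibbs f x := by
  unfold gibbs; fun_prop

variable [Nonempty ι]

lemma sum_exp_pos (f : ι → ℝ) : 0 < ∑ x, exp (f x) :=
  sum_pos (fun x _ => exp_pos (f x)) univ_nonempty

lemma gibbs_pos (f : ι → ℝ) (x : ι) : 0 < gibbs f x :=
  div_pos (exp_pos (f x)) (sum_exp_pos f)

lemma gibbs_le_one (f : ι → ℝ) (x : ι) : gibbs f x ≤ 1 :=
  div_le_one_of_le₀ (single_le_sum (fun y _ => (exp_pos (f y)).le) (mem_univ x))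
    (sum_exp_pos f).le

lemma sum_gibbs (f : ι → ℝ) : ∑ x, gibbs f x = 1 := by
  simp only [gibbs, ← sum_div, div_self (sum_exp_pos f).ne']

lemma sum_gibbs_mul_exp_pos (f g : ι → ℝ) : 0 < ∑ x, gibbs f x * exp (g x) :=
  sum_pos (fun x _ => mul_pos (gibbs_pos f x) (exp_pos (g x))) univ_nonempty

lemma logSumExp_add (f g : ι → ℝ) :
    logSumExp (f + g) = logSumExp f + log (∑ x, gibbs f x * exp (g x)) := by
  have hZ := sum_exp_pos f
  rw [logSumExp, logSumExp, ← log_mul hZ.ne', mul_sum]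
  · simp only [gibbs, Pi.add_apply, exp_add]
    congr 1
    refine sum_congr rfl fun x _ => ?_
    field_simp
  · exact (sum_gibbs_mul_exp_pos f g).ne'

lemma logSumExp_add_ge (f g : ι → ℝ) :
    logSumExp f + ∑ x, gibbs f x * g x ≤ logSumExp (f + g) := by
  rw [logSumExp_add, add_le_add_iff_left, le_log_iff_exp_le (sum_gibbs_mul_exp_pos f g)]
  exact convexOn_exp.map_sum_le (fun x _ => (gibbs_pos f x).le) (sum_gibbs f)
    (fun x _ => Set.mem_univ (g x))

lemma logSumExp_add_le (f g : ι → ℝ) :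
    logSumExp (f + g) ≤ logSumExp f + ∑ x, gibbs f x * (exp (g x) - 1) := by
  rw [logSumExp_add, add_le_add_iff_left]
  simp only [mul_sub, mul_one, sum_sub_distrib, sum_gibbs]
  exact log_le_sub_one_of_pos (sum_gibbs_mul_exp_pos f g)

lemma logSumExp_add_le_of_le {f g : ι → ℝ} {c : ℝ} (hg : ∀ x, g x ≤ c) :
    logSumExp (f + g) ≤ logSumExp f + c := by
  rw [logSumExp_add, add_le_add_iff_left]
  calc log (∑ x, gibbs f x * exp (g x)) ≤ log (∑ x, gibbs f x * exp c) := by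
        gcongr with x
        · exact sum_gibbs_mul_exp_pos f g
        · exact (gibbs_pos f x).le
        · exact hg x
    _ = c := by rw [← sum_mul, sum_gibbs, one_mul, log_exp]

lemma logSumExp_le_add_sum_abs_sub (f g : ι → ℝ) :
    logSumExp f ≤ logSumExp g + ∑ x, |f x - g x| := by
  have hfg : ∀ x, (f - g) x ≤ ∑ y, |f y - g y| := fun x =>
    (le_abs_self _).trans
      (single_le_sum (f := fun y => |f y - g y|) (fun y _ => abs_nonneg _) (mem_univ x))
  simpa using logSumExp_add_le_of_le (f := g) hfg

lemma abs_logSumExp_sub_logSumExp_le (f g : ι → ℝ) :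
    |logSumExp f - logSumExp g| ≤ ∑ x, |f x - g x| := by
  have hgf := logSumExp_le_add_sum_abs_sub g f
  simp only [abs_sub_comm (g _)] at hgf
  rw [abs_sub_le_iff]
  constructor <;> linarith [logSumExp_le_add_sum_abs_sub f g]

end LogSumExp

section Expectation

variable {ι Ω : Type*} [Fintype ι] [Nonempty ι] [MeasurableSpace Ω] {μ : Measure Ω}

lemma integrable_logSumExp [IsFiniteMeasure μ] {F : Ω → ι → ℝ} (hF : Measurable F)
    (hFi : ∀ x, Integrable (fun ω => F ω x) μ) : Integrable (fun ω => logSumExp (F ω)) μ := by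
  refine Integrable.mono' (g := fun ω => |logSumExp (0 : ι → ℝ)| + ∑ x, |F ω x|)
    ((integrable_const _).add (integrable_finsetSum _ fun x _ => (hFi x).abs))
    (measurable_logSumExp.comp hF).aestronglyMeasurable (ae_of_all _ fun ω => ?_)
  have h := abs_logSumExp_sub_logSumExp_le (F ω) 0
  simp only [Pi.zero_apply, sub_zero] at h
  rw [norm_eq_abs]
  linarith [abs_sub_abs_le_abs_sub (logSumExp (F ω)) (logSumExp (0 : ι → ℝ))]

lemma integrable_gibbs_mul {X : Ω → ι → ℝ} (hX : Measurable X) {Y : Ω → ℝ}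
    (hY : Integrable Y μ) (x : ι) : Integrable (fun ω => gibbs (X ω) x * Y ω) μ := by
  refine hY.abs.mono' (((measurable_gibbs x).comp hX).aestronglyMeasurable.mul
    hY.aestronglyMeasurable) (ae_of_all _ fun ω => ?_)
  rw [norm_mul, norm_eq_abs, abs_of_pos (gibbs_pos _ x), norm_eq_abs]
  exact mul_le_of_le_one_left (abs_nonneg _) (gibbs_le_one _ x)

lemma integral_sum_gibbs_mul_eq_zero {X : Ω → ι → ℝ} (hX : Measurable X) {Y : ι → Ω → ℝ}
    (hY : ∀ x, Integrable (Y x) μ) (hY0 : ∀ x, ∫ ω, Y x ω ∂μ = 0)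
    (hXY : ∀ x, IndepFun X (Y x) μ) :
    ∫ ω, ∑ x, gibbs (X ω) x * Y x ω ∂μ = 0 := by
  rw [integral_finsetSum _ fun x _ => integrable_gibbs_mul hX (hY x) x]
  refine sum_eq_zero fun x _ => ?_
  have hind : IndepFun (fun ω => gibbs (X ω) x) (Y x) μ :=
    (hXY x).comp (measurable_gibbs x) measurable_id
  rw [hind.integral_fun_mul_eq_mul_integral ((measurable_gibbs x).comp hX).aestronglyMeasurable
    (hY x).aestronglyMeasurable, hY0 x, mul_zero]

end Expectation

section Bounds

variable {ι Ω : Type*} [Fintype ι] [Nonempty ι] [MeasurableSpace Ω] {μ : Measure Ω}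
  {X R : Ω → ι → ℝ}

theorem integral_logSumExp_le_integral_logSumExp_add [IsFiniteMeasure μ]
    (hX : Measurable X) (hR : Measurable R) (hXi : ∀ x, Integrable (fun ω => X ω x) μ)
    (hRi : ∀ x, Integrable (fun ω => R ω x) μ) (hR0 : ∀ x, ∫ ω, R ω x ∂μ = 0)
    (hXR : IndepFun X R μ) :
    ∫ ω, logSumExp (X ω) ∂μ ≤ ∫ ω, logSumExp (X ω + R ω) ∂μ := by
  have hZX := integrable_logSumExp hX hXi
  have hsum : Integrable (fun ω => ∑ x, gibbs (X ω) x * R ω x) μ :=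
    integrable_finsetSum _ fun x _ => integrable_gibbs_mul hX (hRi x) x
  calc ∫ ω, logSumExp (X ω) ∂μ
      = ∫ ω, logSumExp (X ω) + ∑ x, gibbs (X ω) x * R ω x ∂μ := by
        rw [integral_add hZX hsum, integral_sum_gibbs_mul_eq_zero hX hRi hR0
          (fun x => hXR.comp measurable_id (measurable_pi_apply x)), add_zero]
    _ ≤ ∫ ω, logSumExp (X ω + R ω) ∂μ :=
        integral_mono (hZX.add hsum)
          (integrable_logSumExp (hX.add hR) fun x => (hXi x).add (hRi x))
          fun ω => logSumExp_add_ge (X ω) (R ω)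

theorem integral_logSumExp_add_le [IsProbabilityMeasure μ] {c : ℝ}
    (hX : Measurable X) (hR : Measurable R) (hXi : ∀ x, Integrable (fun ω => X ω x) μ)
    (hRi : ∀ x, Integrable (fun ω => R ω x) μ)
    (hRexp : ∀ x, Integrable (fun ω => exp (R ω x)) μ)
    (hc : ∀ x, cgf (fun ω => R ω x) μ 1 ≤ c) (hXR : IndepFun X R μ) :
    ∫ ω, logSumExp (X ω + R ω) ∂μ ≤ ∫ ω, logSumExp (X ω) ∂μ + c := by
  set κ : ι → ℝ := fun x => cgf (fun ω => R ω x) μ 1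
  set Y : ι → Ω → ℝ := fun x ω => exp (R ω x - κ x) - 1
  have hmgf : ∀ x, exp (κ x) = ∫ ω, exp (R ω x) ∂μ := fun x => by
    have hpos : 0 < mgf (fun ω => R ω x) μ 1 := mgf_pos (by simpa using hRexp x)
    rw [show κ x = log (mgf (fun ω => R ω x) μ 1) from rfl, exp_log hpos]
    simp only [mgf, one_mul]
  have hYi : ∀ x, Integrable (Y x) μ := fun x => by
    simp only [Y, exp_sub]
    exact ((hRexp x).div_const _).sub (integrable_const 1)
  have hY0 : ∀ x, ∫ ω, Y x ω ∂μ = 0 := fun x => by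
    simp only [Y, exp_sub]
    rw [integral_sub ((hRexp x).div_const _) (integrable_const 1), integral_div, ← hmgf,
      div_self (exp_pos _).ne', integral_const, probReal_univ, one_smul, sub_self]
  have hXκ : Measurable fun ω => X ω + κ := hX.add_const κ
  have hXY : ∀ x, IndepFun (fun ω => X ω + κ) (Y x) μ := fun x =>
    hXR.comp (measurable_id.add_const κ)
      (by fun_prop : Measurable fun s : ι → ℝ => exp (s x - κ x) - 1)
  have hZX := integrable_logSumExp hX hXi
  have hsum : Integrable (fun ω => ∑ x, gibbs (X ω + κ) x * Y x ω) μ :=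
    integrable_finsetSum _ fun x _ => integrable_gibbs_mul hXκ (hYi x) x
  have hpt : ∀ ω, logSumExp (X ω + R ω) ≤
      logSumExp (X ω) + c + ∑ x, gibbs (X ω + κ) x * Y x ω := fun ω =>
    calc logSumExp (X ω + R ω) = logSumExp ((X ω + κ) + (R ω - κ)) := by
          rw [add_add_sub_cancel]
      _ ≤ logSumExp (X ω + κ) + ∑ x, gibbs (X ω + κ) x * Y x ω := logSumExp_add_le _ _
      _ ≤ logSumExp (X ω) + c + ∑ x, gibbs (X ω + κ) x * Y x ω := by
          gcongr
          exact logSumExp_add_le_of_le hc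
  calc ∫ ω, logSumExp (X ω + R ω) ∂μ
      ≤ ∫ ω, logSumExp (X ω) + c + ∑ x, gibbs (X ω + κ) x * Y x ω ∂μ :=
        integral_mono (integrable_logSumExp (hX.add hR) fun x => (hXi x).add (hRi x))
          ((hZX.add (integrable_const c)).add hsum) hpt
    _ = ∫ ω, logSumExp (X ω) ∂μ + c := by
        rw [integral_add (f := fun ω => logSumExp (X ω) + c) (hZX.add (integrable_const c)) hsum,
          integral_sum_gibbs_mul_eq_zero hXκ hYi hY0 hXY, add_zero,
          integral_add hZX (integrable_const c), integral_const, probReal_univ, one_smul]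

end Bounds

section Gaussian

variable {Ω ι : Type} [MeasurableSpace Ω] {μ : Measure Ω} [Fintype ι]

lemma IsGaussianVector.hasLaw_eval {H : ι → Ω → ℝ}
    (hH : IsGaussianVector μ H) (x : ι) : ∃ m v, HasLaw (H x) (gaussianReal m v) μ := by
  classical
  obtain ⟨m, v, h⟩ := hH.2 (Pi.single x 1)
  exact ⟨m, v, (hH.1 x).aemeasurable, by simpa [Pi.single_apply] using h⟩

lemma IsGaussianVector.integrable {H : ι → Ω → ℝ}
    (hH : IsGaussianVector μ H) (x : ι) : Integrable (H x) μ := by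
  obtain ⟨m, v, h⟩ := hH.hasLaw_eval x
  exact h.hasGaussianLaw.integrable

lemma IsCenteredGaussianVector.hasLaw_eval {r : ι → Ω → ℝ}
    (hr : IsCenteredGaussianVector μ r) (x : ι) : ∃ v, HasLaw (r x) (gaussianReal 0 v) μ := by
  classical
  obtain ⟨v, h⟩ := hr.2 (Pi.single x 1)
  exact ⟨v, (hr.1 x).aemeasurable, by simpa [Pi.single_apply] using h⟩

end Gaussian

namespace ProbabilityTheory.HasLaw

variable {Ω : Type*} [MeasurableSpace Ω] {μ : Measure Ω} {X : Ω → ℝ} {v : ℝ≥0}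

lemma integral_eq_zero_of_gaussianReal (hX : HasLaw X (gaussianReal 0 v) μ) :
    ∫ ω, X ω ∂μ = 0 := by
  rw [hX.integral_eq, integral_id_gaussianReal]

lemma integrable_exp_of_gaussianReal (hX : HasLaw X (gaussianReal 0 v) μ) :
    Integrable (fun ω => exp (X ω)) μ := by
  have := hX.isProbabilityMeasure
  simpa using mgf_pos_iff (t := 1).mp ((mgf_gaussianReal hX.map_eq 1).symm ▸ exp_pos _)

lemma cgf_one_of_gaussianReal (hX : HasLaw X (gaussianReal 0 v) μ) :
    cgf X μ 1 = Var[X; μ] / 2 := by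
  rw [cgf_gaussianReal hX.map_eq, hX.variance_eq, variance_id_gaussianReal]
  ring

end ProbabilityTheory.HasLaw

/-- Gaussian interpolation bound.
Let `𝒳` be a finite nonempty set, `(r(x))_{x ∈ 𝒳}` a centered Gaussian vector and
`(H(x))_{x ∈ 𝒳}` a Gaussian vector independent of `r`.  Then
`|E log ∑ₓ exp(H(x) + r(x)) − E log ∑ₓ exp(H(x))| ≤ maxₓ Var(r(x))`. -/
theorem statement10 {Ω : Type} [MeasurableSpace Ω] (μ : Measure Ω)
    [IsProbabilityMeasure μ] {ι : Type} [Fintype ι] [Nonempty ι]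
    (r H : ι → Ω → ℝ)
    (hr : IsCenteredGaussianVector μ r) (hH : IsGaussianVector μ H)
    (hInd : IndepFun (fun ω x => r x ω) (fun ω x => H x ω) μ) :
    |(∫ ω, Real.log (∑ x, Real.exp (H x ω + r x ω)) ∂μ) -
        ∫ ω, Real.log (∑ x, Real.exp (H x ω)) ∂μ| ≤
      ⨆ x : ι, variance (r x) μ := by
  choose v hv using hr.hasLaw_eval
  have hXm : Measurable fun ω x => H x ω := measurable_pi_lambda _ hH.1
  have hRm : Measurable fun ω x => r x ω := measurable_pi_lambda _ hr.1
  have hRi : ∀ x, Integrable (r x) μ := fun x => (hv x).hasGaussianLaw.integrable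
  have hlower := integral_logSumExp_le_integral_logSumExp_add hXm hRm hH.integrable hRi
    (fun x => (hv x).integral_eq_zero_of_gaussianReal) hInd.symm
  have hupper := integral_logSumExp_add_le (c := (⨆ x : ι, Var[r x; μ]) / 2) hXm hRm
    hH.integrable hRi
    (fun x => (hv x).integrable_exp_of_gaussianReal)
    (fun x => by
      rw [(hv x).cgf_one_of_gaussianReal]
      gcongr
      exact le_ciSup (Set.finite_range fun x => Var[r x; μ]).bddAbove x)
    hInd.symm
  change |∫ ω, logSumExp ((fun x => H x ω) + fun x => r x ω) ∂μ -
    ∫ ω, logSumExp (fun x => H x ω) ∂μ| ≤ _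
  rw [abs_le]
  constructor <;> linarith

end
end

section
/- Let (X, Y) be a pair of real random variables on a common probability space with X ∈ {0,1} almost surely, P(X = 1) = ρ for some ρ ∈ (0,1), E[Y²] = ρ, and E[XY] ≥ δρ for some constant δ > 0. Then (δ²/4)·ρ ≤ P(Y > δ/2) ≤ (1 + 4/δ²)·ρ, and P(X = 1 | Y > δ/2) ≥ δ⁴/16. -/
/-!
Let `A = {X = 1}` and `B = {Y > δ/2}`. Chebyshev's inequality gives `(δ/2)² P(B) ≤ E[Y²] = ρ`.
For the joint event, the pointwise bound
`X Y ≤ (δ/2) X + δ⁻¹ 1_{A ∩ B} + (δ/4) Y²`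
(on `Bᶜ` use `Y ≤ δ/2`, on `B` use AM-GM `Y ≤ δ⁻¹ + (δ/4) Y²`) integrates to
`δρ ≤ (δ/2)ρ + δ⁻¹ P(A ∩ B) + (δ/4)ρ`, i.e. `P(A ∩ B) ≥ (δ²/4)ρ`.
Both bounds on `P(B)` and the bound on `P(A ∩ B) / P(B)` follow.
-/

open MeasureTheory

lemma mul_le_half_mul_add_inv_mul_ite_add_quarter_mul_sq {x y δ : ℝ} (hx : x = 0 ∨ x = 1)
    (hδ : 0 < δ) :
    x * y ≤ δ / 2 * x + δ⁻¹ * (if x = 1 ∧ δ / 2 < y then 1 else 0) + δ / 4 * y ^ 2 := by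
  rcases hx with rfl | rfl
  · simp only [zero_mul, mul_zero, zero_ne_one, false_and, if_false, zero_add]
    positivity
  · have hδinv : δ * δ⁻¹ = 1 := mul_inv_cancel₀ hδ.ne'
    split_ifs with hy
    · nlinarith [sq_nonneg (δ * y - 2), inv_pos.mpr hδ]
    · simp only [true_and, not_lt] at hy
      nlinarith [sq_nonneg y]

section

variable {Ω : Type*} [MeasurableSpace Ω] {μ : Measure Ω} {X Y : Ω → ℝ}

lemma ae_eq_indicator_one_of_ae_zero_or_one (hX01 : ∀ᵐ ω ∂μ, X ω = 0 ∨ X ω = 1) :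
    X =ᵐ[μ] {ω | X ω = 1}.indicator 1 := by
  filter_upwards [hX01] with ω hω
  rcases hω with hω | hω <;> simp [hω]

lemma integral_eq_measureReal_of_ae_zero_or_one (hX : Measurable X)
    (hX01 : ∀ᵐ ω ∂μ, X ω = 0 ∨ X ω = 1) :
    ∫ ω, X ω ∂μ = μ.real {ω | X ω = 1} := by
  have hA : MeasurableSet {ω | X ω = 1} := hX (measurableSet_singleton 1)
  rw [integral_congr_ae (ae_eq_indicator_one_of_ae_zero_or_one hX01), integral_indicator_one hA]

lemma integrable_of_ae_zero_or_one [IsFiniteMeasure μ] (hX : Measurable X)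
    (hX01 : ∀ᵐ ω ∂μ, X ω = 0 ∨ X ω = 1) : Integrable X μ :=
  ((integrable_const (1 : ℝ)).indicator (hX (measurableSet_singleton 1))).congr
    (ae_eq_indicator_one_of_ae_zero_or_one hX01).symm

lemma sq_mul_measureReal_lt_le_integral_sq [IsFiniteMeasure μ]
    (hY2int : Integrable (fun ω => Y ω ^ 2) μ) {t : ℝ} (ht : 0 ≤ t) :
    t ^ 2 * μ.real {ω | t < Y ω} ≤ ∫ ω, Y ω ^ 2 ∂μ := by
  have hsub : {ω | t < Y ω} ⊆ {ω | t ^ 2 ≤ Y ω ^ 2} := fun ω hω =>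
    pow_le_pow_left₀ ht (le_of_lt hω) 2
  calc t ^ 2 * μ.real {ω | t < Y ω} ≤ t ^ 2 * μ.real {ω | t ^ 2 ≤ Y ω ^ 2} :=
      mul_le_mul_of_nonneg_left (measureReal_mono hsub) (sq_nonneg t)
    _ ≤ ∫ ω, Y ω ^ 2 ∂μ :=
      mul_meas_ge_le_integral_of_nonneg (.of_forall fun ω => sq_nonneg (Y ω)) hY2int _

lemma integral_mul_le_measureReal_inter_tail [IsFiniteMeasure μ] (hX : Measurable X)
    (hY : Measurable Y) (hX01 : ∀ᵐ ω ∂μ, X ω = 0 ∨ X ω = 1)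
    (hY2int : Integrable (fun ω => Y ω ^ 2) μ) (hXYint : Integrable (fun ω => X ω * Y ω) μ)
    {δ : ℝ} (hδ : 0 < δ) :
    ∫ ω, X ω * Y ω ∂μ ≤ δ / 2 * μ.real {ω | X ω = 1}
      + δ⁻¹ * μ.real {ω | X ω = 1 ∧ δ / 2 < Y ω} + δ / 4 * ∫ ω, Y ω ^ 2 ∂μ := by
  set C := {ω | X ω = 1 ∧ δ / 2 < Y ω}
  have hC : MeasurableSet C :=
    (hX (measurableSet_singleton 1)).inter (measurableSet_lt measurable_const hY)
  have hXint := integrable_of_ae_zero_or_one hX hX01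
  have hCint : Integrable (C.indicator 1) μ := (integrable_const (1 : ℝ)).indicator hC
  have hbound_int : ∫ ω, (δ / 2 * X ω + δ⁻¹ * C.indicator 1 ω + δ / 4 * Y ω ^ 2) ∂μ
      = δ / 2 * μ.real {ω | X ω = 1} + δ⁻¹ * μ.real C + δ / 4 * ∫ ω, Y ω ^ 2 ∂μ := by
    rw [integral_add ((hXint.const_mul _).fun_add (hCint.const_mul _)) (hY2int.const_mul _),
      integral_add (hXint.const_mul _) (hCint.const_mul _), integral_const_mul,
      integral_const_mul, integral_const_mul, integral_indicator_one hC,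
      integral_eq_measureReal_of_ae_zero_or_one hX hX01]
  rw [← hbound_int]
  refine integral_mono_ae hXYint
    (((hXint.const_mul _).add (hCint.const_mul _)).add (hY2int.const_mul _)) ?_
  filter_upwards [hX01] with ω hω
  simpa only [C, Set.indicator_apply, Set.mem_ofPred_eq, Pi.one_apply] using
    mul_le_half_mul_add_inv_mul_ite_add_quarter_mul_sq (y := Y ω) hω hδ

end

/-- a Paley–Zygmund-type rounding lemma.
Let `(X, Y)` be real random variables with `X ∈ {0,1}` a.s., `P(X = 1) = ρ` for some
`ρ ∈ (0,1)`, `E[Y²] = ρ`, and `E[XY] ≥ δρ` for a constant `δ > 0`.  Then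
`(δ²/4)ρ ≤ P(Y > δ/2) ≤ (1 + 4/δ²)ρ` and `P(X = 1 | Y > δ/2) ≥ δ⁴/16`. -/
theorem statement11 {Ω : Type} [MeasurableSpace Ω] (μ : Measure Ω)
    [IsProbabilityMeasure μ] (X Y : Ω → ℝ) (hX : Measurable X) (hY : Measurable Y)
    (ρ δ : ℝ) (hρ : ρ ∈ Set.Ioo (0 : ℝ) 1) (hδ : 0 < δ)
    (hX01 : ∀ᵐ ω ∂μ, X ω = 0 ∨ X ω = 1)
    (hXρ : (μ {ω | X ω = 1}).toReal = ρ)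
    (hY2int : Integrable (fun ω => Y ω ^ 2) μ)
    (hY2 : ∫ ω, Y ω ^ 2 ∂μ = ρ)
    (hXYint : Integrable (fun ω => X ω * Y ω) μ)
    (hXY : δ * ρ ≤ ∫ ω, X ω * Y ω ∂μ) :
    δ ^ 2 / 4 * ρ ≤ (μ {ω | δ / 2 < Y ω}).toReal ∧
    (μ {ω | δ / 2 < Y ω}).toReal ≤ (1 + 4 / δ ^ 2) * ρ ∧
    δ ^ 4 / 16 ≤
      (μ {ω | X ω = 1 ∧ δ / 2 < Y ω}).toReal / (μ {ω | δ / 2 < Y ω}).toReal := by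
  simp only [← measureReal_def] at hXρ ⊢
  set pB := μ.real {ω | δ / 2 < Y ω}
  set pAB := μ.real {ω | X ω = 1 ∧ δ / 2 < Y ω}
  have hρ0 : 0 < ρ := hρ.1
  have hjoint : δ ^ 2 / 4 * ρ ≤ pAB := by
    have h := integral_mul_le_measureReal_inter_tail hX hY hX01 hY2int hXYint hδ
    rw [hXρ, hY2] at h
    calc δ ^ 2 / 4 * ρ = δ * (δ * ρ / 4) := by ring
      _ ≤ δ * (δ⁻¹ * pAB) := by gcongr; linarith
      _ = pAB := by field_simp
  have hcheb : δ ^ 2 / 4 * pB ≤ ρ := by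
    simpa [hY2, div_pow, (by norm_num : (2 : ℝ) ^ 2 = 4)] using sq_mul_measureReal_lt_le_integral_sq hY2int (half_pos hδ).le
  have hAB_le_B : pAB ≤ pB := measureReal_mono fun ω hω => hω.2
  have hB_le : pB ≤ 4 / δ ^ 2 * ρ := by
    rw [div_mul_eq_mul_div, le_div_iff₀ (by positivity)]
    linarith
  have hB_pos : 0 < pB := lt_of_lt_of_le (by positivity) (hjoint.trans hAB_le_B)
  refine ⟨hjoint.trans hAB_le_B, hB_le.trans (by nlinarith), ?_⟩
  rw [le_div_iff₀ hB_pos]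
  calc δ ^ 4 / 16 * pB = δ ^ 2 / 4 * (δ ^ 2 / 4 * pB) := by ring
    _ ≤ δ ^ 2 / 4 * ρ := by gcongr
    _ ≤ pAB := hjoint
end
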